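/- Main theorem (sign obstruction): if m ≡ 3 (mod 4) and n is even, then for every b : Σ^{n-1} → {0,1} the successor permutation f_S(x_1,...,x_n) = (x_2,...,x_n, x_1 + b(x_2,...,x_n) mod m) is not a single cycle of length m^n on Σ^n; equivalently, the digraph SB(m,n) has no Hamiltonian cycle. -/

import Mathlib

/-- The suffix `(x_2,…,x_n)` of `x = (x_1,…,x_n)`. -/
def sfx {m n : ℕ} (x : Fin n → ZMod m) : Fin (n - 1) → ZMod m :=
  fun j => x ⟨(j : ℕ) + 1, by have := j.isLt; omega⟩

/-- The successor map `f_S(x_1,…,x_n) = (x_2,…,x_n, x_1 + b(x_2,…,x_n))`. -/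
def fS {m n : ℕ} (b : (Fin (n - 1) → ZMod m) → ZMod m) (x : Fin n → ZMod m) :
    Fin n → ZMod m :=
  fun i => if h : (i : ℕ) + 1 < n then x ⟨(i : ℕ) + 1, h⟩
           else x ⟨0, Nat.lt_of_le_of_lt (Nat.zero_le _) i.isLt⟩ + b (sfx x)

/-!
`f_S` is the shear `x ↦ (x_1 + b(x_2,…,x_n), x_2, …, x_n)` followed by the cyclic shift of
coordinates. The shear has order dividing `m`, which is odd, so it is an even permutation.
A transposition of coordinates fixes the `m^(n-1)` words on which the two coordinates agree and
swaps the remaining ones in `m^(n-1) (m - 1) / 2` pairs, an odd number when `m ≡ 3 (mod 4)`; hence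
permuting coordinates by `σ` has the sign of `σ`, and the shift, an `n`-cycle with `n` even, is odd.
So `f_S` is odd. A single cycle through all `m^n` words would have odd order `m^n`, hence be even.
-/

open Equiv

namespace Equiv.Perm

section Sign

variable {α : Type*} [Fintype α] [DecidableEq α]

theorem sign_eq_one_of_pow_eq_one {σ : Perm α} {c : ℕ} (hc : Odd c) (h : σ ^ c = 1) :
    sign σ = 1 := by
  have hc' : sign σ ^ c = 1 := by rw [← map_pow, h, map_one]
  rcases Int.units_eq_one_or (sign σ) with h1 | h1
  · exact h1
  · rw [h1, hc.neg_one_pow] at hc'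
    exact absurd hc' (by decide)

theorem sign_eq_one_of_forall_exists_pow_apply_eq (hα : Odd (Fintype.card α)) {σ : Perm α}
    {x : α} (hx : ∀ y, ∃ k : ℕ, (σ ^ k) x = y) : sign σ = 1 := by
  have hsame (y : α) : σ.SameCycle x y := by
    obtain ⟨k, rfl⟩ := hx y
    exact ⟨k, by rw [zpow_natCast]⟩
  have hcyc : σ.IsCycleOn (Finset.univ : Finset α) :=
    ⟨by simp, fun y _ z _ => (hsame y).symm.trans (hsame z)⟩
  refine sign_eq_one_of_pow_eq_one hα (ext fun y => ?_)
  simpa using hcyc.pow_card_apply (Finset.mem_univ y)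

end Sign

section ArrowCongr

variable {α : Type*} (β : Type*)

def arrowCongrLeft : Perm α →* Perm (α → β) where
  toFun σ := σ.arrowCongr (Equiv.refl β)
  map_one' := rfl
  map_mul' _ _ := rfl

variable {β}

theorem arrowCongrLeft_apply (σ : Perm α) (f : α → β) : arrowCongrLeft β σ f = f ∘ σ.symm :=
  rfl

variable [DecidableEq α]

theorem arrowCongrLeft_swap_apply_eq_self_iff {i j : α} (f : α → β) :
    arrowCongrLeft β (swap i j) f = f ↔ f i = f j := by
  rw [arrowCongrLeft_apply, symm_swap]
  refine ⟨fun h => by simpa using congrFun h j, fun h => ?_⟩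
  grind [comp_swap_eq_update]

def subtypeApplyEqEquiv {i j : α} (hij : i ≠ j) :
    {f : α → β // f i = f j} ≃ ({a : α // a ≠ j} → β) where
  toFun f a := f.1 a
  invFun g := ⟨fun a => if h : a = j then g ⟨i, hij⟩ else g ⟨a, h⟩, by simp [hij]⟩
  left_inv f := by
    ext a
    by_cases ha : a = j
    · subst ha; simp [f.2]
    · simp [ha]
  right_inv g := by
    funext a
    simp [a.2]

variable [Fintype α] [Fintype β] [DecidableEq β]

theorem card_subtype_apply_eq {i j : α} (hij : i ≠ j) :
    Fintype.card {f : α → β // f i = f j} = Fintype.card β ^ (Fintype.card α - 1) := by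
  rw [Fintype.card_congr (subtypeApplyEqEquiv hij), Fintype.card_fun,
    Fintype.card_subtype_compl, Fintype.card_subtype_eq]

theorem sign_arrowCongrLeft_swap (hβ : Fintype.card β % 4 = 3) {i j : α} (hij : i ≠ j) :
    sign (arrowCongrLeft β (swap i j)) = -1 := by
  have hfix : Fintype.card (Function.fixedPoints (arrowCongrLeft β (swap i j)))
      = Fintype.card β ^ (Fintype.card α - 1) := by
    rw [← card_subtype_apply_eq hij]
    exact Fintype.card_congr (subtypeEquivRight fun f => arrowCongrLeft_swap_apply_eq_self_iff f)
  rw [sign_of_pow_two_eq_one (by rw [sq, ← map_mul, swap_mul_self, map_one]), hfix,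
    Fintype.card_fun]
  obtain ⟨t, ht⟩ : ∃ t, Fintype.card β = 4 * t + 3 := ⟨Fintype.card β / 4, by omega⟩
  obtain ⟨N, hN⟩ : ∃ N, Fintype.card α = N + 1 :=
    ⟨Fintype.card α - 1, by have := Fintype.card_pos_iff.2 ⟨i⟩; omega⟩
  rw [ht, hN, Nat.add_sub_cancel]
  have : (4 * t + 3) ^ (N + 1) - (4 * t + 3) ^ N = 2 * ((4 * t + 3) ^ N * (2 * t + 1)) :=
    Nat.sub_eq_of_eq_add (by ring)
  rw [this, Nat.mul_div_cancel_left _ two_pos, Odd.neg_one_pow]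
  exact (Odd.pow ⟨2 * t + 1, by ring⟩).mul ⟨t, rfl⟩

theorem sign_arrowCongrLeft (hβ : Fintype.card β % 4 = 3) (σ : Perm α) :
    sign (arrowCongrLeft β σ) = sign σ := by
  induction σ using swap_induction_on with
  | one => simp
  | swap_mul σ i j hij ih =>
    rw [map_mul, map_mul, map_mul, ih, sign_arrowCongrLeft_swap hβ hij, sign_swap hij]

end ArrowCongr

section HeadShear

variable {G : Type*} [AddCommGroup G] {k : ℕ}

def headShear (c : (Fin k → G) → G) : Perm (Fin (k + 1) → G) where
  toFun x := Fin.cons (x 0 + c (Fin.tail x)) (Fin.tail x)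
  invFun x := Fin.cons (x 0 - c (Fin.tail x)) (Fin.tail x)
  left_inv x := by simp
  right_inv x := by simp

theorem headShear_apply (c : (Fin k → G) → G) (x : Fin (k + 1) → G) :
    headShear c x = Fin.cons (x 0 + c (Fin.tail x)) (Fin.tail x) :=
  rfl

theorem headShear_zero : headShear (0 : (Fin k → G) → G) = 1 := by
  ext x i
  simp [headShear_apply]

theorem headShear_add (c d : (Fin k → G) → G) :
    headShear (c + d) = headShear c * headShear d := by
  ext x : 1
  simp [headShear_apply, add_assoc, add_comm (d _)]

theorem headShear_pow (c : (Fin k → G) → G) (j : ℕ) : headShear c ^ j = headShear (j • c) := by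
  induction j with
  | zero => rw [pow_zero, zero_smul, headShear_zero]
  | succ j ih => rw [pow_succ, ih, succ_nsmul, headShear_add]

theorem sign_headShear [Fintype G] [DecidableEq G] (hG : Odd (Fintype.card G))
    (c : (Fin k → G) → G) : sign (headShear c) = 1 :=
  sign_eq_one_of_pow_eq_one hG <| by
    rw [headShear_pow, show Fintype.card G • c = 0 from funext fun _ => card_nsmul_eq_zero,
      headShear_zero]

end HeadShear

end Equiv.Perm

open Equiv.Perm

theorem sfx_eq_tail {m k : ℕ} (x : Fin (k + 1) → ZMod m) : sfx x = Fin.tail x :=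
  rfl

theorem fS_eq_arrowCongrLeft_mul_headShear {m k : ℕ} (b : (Fin k → ZMod m) → ZMod m) :
    fS (n := k + 1) b = ⇑(arrowCongrLeft (ZMod m) (finRotate (k + 1))⁻¹ * headShear b) := by
  funext x
  calc fS b x
      = Fin.snoc (Fin.tail x) (x 0 + b (Fin.tail x)) := ?_
    _ = Fin.cons (x 0 + b (Fin.tail x)) (Fin.tail x) ∘ finRotate (k + 1) :=
      Fin.snoc_eq_cons_rotate _ _
  funext i
  induction i using Fin.lastCases with
  | last => simp [fS, sfx_eq_tail]
  | cast j => simp [fS, Fin.tail, Fin.succ]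

theorem no_hamiltonian_cycle_general (m n : ℕ) (hm : m % 4 = 3) (hn : Even n) (hn0 : 0 < n)
    (b : (Fin (n - 1) → ZMod m) → ZMod m) :
    ¬ ∃ x : Fin n → ZMod m, ∀ y : Fin n → ZMod m, ∃ k : ℕ, (fS b)^[k] x = y := by
  obtain ⟨k, rfl⟩ : ∃ k, n = k + 1 := ⟨n - 1, by omega⟩
  have : NeZero m := ⟨by omega⟩
  have hm_odd : Odd m := Nat.odd_iff.2 (by omega)
  have hk_odd : Odd k := Nat.not_even_iff_odd.1 (Nat.even_add_one.1 hn)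
  set F := arrowCongrLeft (ZMod m) (finRotate (k + 1))⁻¹ * headShear (k := k) b
  have hF : fS b = ⇑F := fS_eq_arrowCongrLeft_mul_headShear b
  rintro ⟨x, hx⟩
  have h_cycle : sign F = 1 := by
    refine sign_eq_one_of_forall_exists_pow_apply_eq (by simpa using hm_odd.pow) (x := x) ?_
    simpa only [hF, iterate_eq_pow] using hx
  have h_odd : sign F = -1 := by
    rw [map_mul, sign_headShear (by simpa using hm_odd), sign_arrowCongrLeft (by simpa using hm),
      sign_inv, sign_finRotate, Nat.add_sub_cancel, hk_odd.neg_one_pow, mul_one]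
  exact absurd (h_cycle.symm.trans h_odd) (by decide)

/-- main theorem, sign obstruction: if `m ≡ 3 (mod 4)` and `n`
is even, then for every choice function `b : Σ^{n-1} → {0,1}` the successor map
`f_S` is not a single cycle through all `m^n` states of `Σ^n`; equivalently,
the digraph `SB(m,n)` has no Hamiltonian cycle. -/
theorem no_hamiltonian_cycle (m n : ℕ) (hm : m % 4 = 3) (hn : Even n) (hn0 : 0 < n)
    (b : (Fin (n - 1) → ZMod m) → ZMod m) (hb : ∀ y, b y = 0 ∨ b y = 1) :
    ¬ ∃ x : Fin n → ZMod m, ∀ y : Fin n → ZMod m, ∃ k : ℕ, (fS b)^[k] x = y :=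
  no_hamiltonian_cycle_general m n hm hn hn0 b
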